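/- Let A be an abelian category and g• : B• → C• any morphism of chain complexes. For each n, let h^{FB}_n : Cok(d^B_{n+1}) → Ker(d^B_{n-1}) and h^{FC}_n : Cok(d^C_{n+1}) → Ker(d^C_{n-1}) be the canonical arrows, let ḡ_n : Cok(d^B_{n+1}) → Cok(d^C_{n+1}) and g̲_n : Ker(d^B_{n-1}) → Ker(d^C_{n-1}) be the arrows induced by g•, let P_n be the pullback of g̲_n along h^{FC}_n, and let h^P_n = ⟨h^{FB}_n, ḡ_n⟩ : Cok(d^B_{n+1}) → P_n. Then there is a long exact sequence ... → H_{n+1}(B•) → H_{n+1}(C•) → Cok(h^P_{n+1}) → H_n(B•) → H_n(C•) → Cok(h^P_n) → ..., where: H_{n+1}(B•) → H_{n+1}(C•) is the arrow induced by g• on homology (identified with the arrow Ker(h^{FB}_{n+1}) → Ker(h^{FC}_{n+1}) induced on kernels); H_{n+1}(C•) ≅ Ker(h^{FC}_{n+1}) → Cok(h^P_{n+1}) is the composite of ⟨0, k⟩ : Ker(h^{FC}_{n+1}) → P_{n+1} with the cokernel projection of h^P_{n+1}; and Cok(h^P_{n+1}) → Cok(h^{FB}_{n+1}) ≅ H_n(B•)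 is induced by the pullback projection P_{n+1} → Ker(d^B_n). -/

import Mathlib

open CategoryTheory CategoryTheory.Limits

noncomputable section

universe v u

variable {A : Type u} [Category.{v} A] [HasZeroMorphisms A] [HasKernels A] [HasCokernels A]

/-- The factorization `C_q ⟶ Ker(d r s)` of the differential `d q r`. -/
def kFac (C : ChainComplex A ℤ) (q r s : ℤ) : C.X q ⟶ kernel (C.d r s) :=
  kernel.lift (C.d r s) (C.d q r) (C.d_comp_d q r s)

/-- The canonical arrow `h^{FC} : Cok(d p q) ⟶ Ker(d r s)` induced by the differential
`d q r` of the complex `C` (for a window `p, q, r, s` of indices): the unique arrow with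
`q^C ≫ h^{FC} ≫ k^C = d q r`. -/
def hSeq (C : ChainComplex A ℤ) (p q r s : ℤ) : cokernel (C.d p q) ⟶ kernel (C.d r s) :=
  cokernel.desc (C.d p q) (kFac C q r s) (by
    rw [← cancel_mono (kernel.ι (C.d r s))]
    simp [kFac])

/-- The canonical connecting arrow `Cok(h^{FC}_{n+1}) ⟶ Ker(h^{FC}_n)` (for a window
`p, q, r, s, t` of indices), the unique arrow `i` with
`cokernel.π ≫ i ≫ kernel.ι = kernel.ι ≫ cokernel.π`. -/
def iSeq (C : ChainComplex A ℤ) (p q r s t : ℤ) :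
    cokernel (hSeq C p q r s) ⟶ kernel (hSeq C q r s t) :=
  kernel.lift (hSeq C q r s t)
    (cokernel.desc (hSeq C p q r s) (kernel.ι (C.d r s) ≫ cokernel.π (C.d q r))
      (by
        ext
        simp [hSeq, kFac]))
    (by
      rw [← cancel_epi (cokernel.π (hSeq C p q r s)), ← cancel_mono (kernel.ι (C.d s t))]
      simp only [Category.assoc, cokernel.π_desc_assoc, comp_zero, zero_comp]
      simp [hSeq, kFac])

/-- The arrow induced by a chain map on the cokernels of the differentials. -/
def cokMap {B C : ChainComplex A ℤ} (g : B ⟶ C) (p q : ℤ) :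
    cokernel (B.d p q) ⟶ cokernel (C.d p q) :=
  cokernel.map (B.d p q) (C.d p q) (g.f p) (g.f q) (g.comm p q).symm

/-- The arrow induced by a chain map on the kernels of the differentials. -/
def kerMap {B C : ChainComplex A ℤ} (g : B ⟶ C) (r s : ℤ) :
    kernel (B.d r s) ⟶ kernel (C.d r s) :=
  kernel.map (B.d r s) (C.d r s) (g.f r) (g.f s) (g.comm r s).symm

/-- Naturality of `hSeq` with respect to chain maps. -/
theorem hSeq_nat {B C : ChainComplex A ℤ} (g : B ⟶ C) (p q r s : ℤ) :
    hSeq B p q r s ≫ kerMap g r s = cokMap g p q ≫ hSeq C p q r s := by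
  ext
  simp [hSeq, kFac, kerMap, cokMap]

section LongSeq
variable [HasPullbacks A] {B C : ChainComplex A ℤ}

/-- The pullback `P n` of `g̲ n : Ker(d^B_{n-1}) ⟶ Ker(d^C_{n-1})` along
`h^{FC}_n : Cok(d^C_{n+1}) ⟶ Ker(d^C_{n-1})`. -/
def Pb (g : B ⟶ C) (n : ℤ) : A :=
  pullback (kerMap g (n-1) (n-2)) (hSeq C (n+1) n (n-1) (n-2))

/-- The comparison `h^P n = ⟨h^{FB}_n, ḡ_n⟩ : Cok(d^B_{n+1}) ⟶ P n`. -/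
def hPb (g : B ⟶ C) (n : ℤ) : cokernel (B.d (n+1) n) ⟶ Pb g n :=
  pullback.lift (hSeq B (n+1) n (n-1) (n-2)) (cokMap g (n+1) n)
    (hSeq_nat g (n+1) n (n-1) (n-2))

/-- `Cok(h^P_n) ⟶ Cok(h^{FB}_n)`, induced by the pullback projection. -/
def CpiPb (g : B ⟶ C) (n : ℤ) :
    cokernel (hPb g n) ⟶ cokernel (hSeq B (n+1) n (n-1) (n-2)) :=
  cokernel.map (hPb g n) (hSeq B (n+1) n (n-1) (n-2)) (𝟙 _)
    (pullback.fst (kerMap g (n-1) (n-2)) (hSeq C (n+1) n (n-1) (n-2))) (by rw [Category.id_comp]; exact pullback.lift_fst ..)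

/-- `δ n : Ker(h^{FC}_n) ⟶ Cok(h^P_n)`, the composite of `⟨0, k⟩` with the cokernel
projection of `h^P_n`. -/
def delPb (g : B ⟶ C) (n : ℤ) :
    kernel (hSeq C (n+1) n (n-1) (n-2)) ⟶ cokernel (hPb g n) :=
  pullback.lift 0 (kernel.ι (hSeq C (n+1) n (n-1) (n-2))) (by simp) ≫ cokernel.π (hPb g n)

/-- The arrow induced by `g` on homology, in the kernel representation
`H_n ≅ Ker(h^{F}_n)`. -/
def Kg (g : B ⟶ C) (p q r s : ℤ) : kernel (hSeq B p q r s) ⟶ kernel (hSeq C p q r s) :=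
  kernel.map (hSeq B p q r s) (hSeq C p q r s) (cokMap g p q) (kerMap g r s)
    (hSeq_nat g p q r s)

end LongSeq

/-!
For any commutative square `f ≫ b = a ≫ f'` in an abelian category, with `⟨f, a⟩ : X ⟶ P` the
induced map into the pullback of `b` and `f'`, the sequence
`Ker f ⟶ Ker f' ⟶ Cok ⟨f, a⟩ ⟶ Cok f ⟶ Cok f'` is exact, by a short diagram chase. Applied to the square `h^{FB}_n ≫ g̲_n = ḡ_n ≫ h^{FC}_n` it gives the sequence of the
theorem, once `Cok(h^{FX}_n)` is identified with `Ker(h^{FX}_{n-1})` through `iSeq`. That map is the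
comparison between the left and the right homology of `X_n ⟶ X_{n-1} ⟶ X_{n-2}`, hence an
isomorphism, and it is natural in `X`.
-/

lemma CategoryTheory.ShortComplex.Exact.exists_exact_mk_of_iso_of_mono
    {A : Type u} [Category.{v} A] [Abelian A] {S : ShortComplex A} (hS : S.Exact)
    {X₂ X₃ : A} {f : S.X₁ ⟶ X₂} {g : X₂ ⟶ X₃} (e : S.X₂ ≅ X₂) (m : S.X₃ ⟶ X₃) [Mono m]
    (hf : S.f ≫ e.hom = f) (hg : e.hom ≫ g = S.g ≫ m) :
    ∃ w : f ≫ g = 0, (ShortComplex.mk f g w).Exact := by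
  have w : f ≫ g = 0 := by
    rw [← hf, Category.assoc, hg, S.zero_assoc, zero_comp]
  let φ : S ⟶ ShortComplex.mk f g w :=
    { τ₁ := 𝟙 _, τ₂ := e.hom, τ₃ := m, comm₁₂ := (Category.id_comp f).trans hf.symm, comm₂₃ := hg }
  exact ⟨w, (exact_iff_of_epi_of_isIso_of_mono φ).1 hS⟩

namespace CategoryTheory.Abelian

open CokernelCofork.IsColimit

variable {A : Type u} [Category.{v} A] [Abelian A] {X Y X' Y' : A}

def kernelToPullback (b : Y ⟶ Y') (f' : X' ⟶ Y') : kernel f' ⟶ pullback b f' :=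
  pullback.lift 0 (kernel.ι f') (by simp)

variable {f : X ⟶ Y} {f' : X' ⟶ Y'} {a : X ⟶ X'} {b : Y ⟶ Y'} (w : f ≫ b = a ≫ f')

def squareδ : kernel f' ⟶ cokernel (pullback.lift f a w) :=
  kernelToPullback b f' ≫ cokernel.π _

def squareCokernelFst : cokernel (pullback.lift f a w) ⟶ cokernel f :=
  cokernel.map _ f (𝟙 _) (pullback.fst b f') (by simp [pullback.lift_fst])

lemma cokernel_π_comp_squareCokernelFst :
    cokernel.π _ ≫ squareCokernelFst w = pullback.fst b f' ≫ cokernel.π f :=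
  cokernel.π_desc ..

lemma kernel_map_comp_squareδ : kernel.map f f' a b w ≫ squareδ w = 0 := by
  have : kernel.map f f' a b w ≫ kernelToPullback b f' = kernel.ι f ≫ pullback.lift f a w := by
    apply pullback.hom_ext <;> simp [kernelToPullback, pullback.lift_fst, pullback.lift_snd]
  simp [squareδ, reassoc_of% this]

lemma squareδ_comp_squareCokernelFst : squareδ w ≫ squareCokernelFst w = 0 := by
  simp [squareδ, kernelToPullback, cokernel_π_comp_squareCokernelFst, pullback.lift_fst_assoc]

lemma squareCokernelFst_comp_cokernel_map :
    squareCokernelFst w ≫ cokernel.map f f' a b w = 0 := by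
  ext
  simp [reassoc_of% (cokernel_π_comp_squareCokernelFst w), pullback.condition_assoc]

lemma exact_kernel_map_squareδ :
    (ShortComplex.mk _ _ (kernel_map_comp_squareδ w)).Exact := by
  rw [ShortComplex.exact_iff_exact_up_to_refinements]
  intro T x hx
  obtain ⟨T', π, _, y, hy⟩ := (comp_π_eq_zero_iff_up_to_refinements (cokernelIsCokernel _)
    (x ≫ kernelToPullback b f')).1 (by simpa [squareδ] using hx)
  have hyf : y ≫ f = 0 := by simpa [kernelToPullback, pullback.lift_fst] using (hy =≫ pullback.fst b f').symm
  refine ⟨T', π, inferInstance, kernel.lift f y hyf, ?_⟩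
  ext
  simpa [kernelToPullback, pullback.lift_snd] using hy =≫ pullback.snd b f'

lemma exact_squareδ_squareCokernelFst :
    (ShortComplex.mk _ _ (squareδ_comp_squareCokernelFst w)).Exact := by
  rw [ShortComplex.exact_iff_exact_up_to_refinements]
  intro T ξ hξ
  obtain ⟨T₁, π₁, _, p, hp⟩ := surjective_up_to_refinements_of_epi (cokernel.π _) ξ
  have hpfst : (p ≫ pullback.fst b f') ≫ cokernel.π f = 0 := by
    simpa [cokernel_π_comp_squareCokernelFst, reassoc_of% hp] using π₁ ≫= hξ
  obtain ⟨T₂, π₂, _, x, hx⟩ :=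
    (comp_π_eq_zero_iff_up_to_refinements (cokernelIsCokernel _) _).1 hpfst
  -- subtracting a boundary moves `π₂ ≫ p` over `0 ∈ Y` without changing its class in `Cok ⟨f, a⟩`
  set p' := π₂ ≫ p - x ≫ pullback.lift f a w
  have hp'fst : p' ≫ pullback.fst b f' = 0 := by
    simp [p', hx, pullback.lift_fst]
  have hp'snd : (p' ≫ pullback.snd b f') ≫ f' = 0 := by
    rw [Category.assoc, ← pullback.condition, reassoc_of% hp'fst, zero_comp]
  refine ⟨T₂, π₂ ≫ π₁, inferInstance, kernel.lift f' _ hp'snd, ?_⟩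
  have hlift : kernel.lift f' _ hp'snd ≫ kernelToPullback b f' = p' := by
    apply pullback.hom_ext <;> simp [kernelToPullback, hp'fst, pullback.lift_fst, pullback.lift_snd]
  simp only [squareδ, reassoc_of% hlift]
  simp [p', hp]

lemma exact_squareCokernelFst_cokernel_map :
    (ShortComplex.mk _ _ (squareCokernelFst_comp_cokernel_map w)).Exact := by
  rw [ShortComplex.exact_iff_exact_up_to_refinements]
  intro T η hη
  obtain ⟨T₁, π₁, _, y, hy⟩ := surjective_up_to_refinements_of_epi (cokernel.π f) η
  have hyb : (y ≫ b) ≫ cokernel.π f' = 0 := by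
    simpa [reassoc_of% hy] using π₁ ≫= hη
  obtain ⟨T₂, π₂, _, x', hx'⟩ :=
    (comp_π_eq_zero_iff_up_to_refinements (cokernelIsCokernel _) _).1 hyb
  refine ⟨T₂, π₂ ≫ π₁, inferInstance,
    pullback.lift (π₂ ≫ y) x' (by simpa using hx') ≫ cokernel.π _, ?_⟩
  simp [cokernel_π_comp_squareCokernelFst, pullback.lift_fst_assoc, hy]

end CategoryTheory.Abelian

section HomologyComparison

variable {A : Type u} [Category.{v} A] [Abelian A]

lemma π_hSeq (X : ChainComplex A ℤ) (p q r s : ℤ) :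
    cokernel.π (X.d p q) ≫ hSeq X p q r s = kFac X q r s :=
  cokernel.π_desc ..

lemma hSeq_ι (X : ChainComplex A ℤ) (q r s t : ℤ) :
    hSeq X q r s t ≫ kernel.ι (X.d s t) = cokernel.desc _ (X.d r s) (X.d_comp_d q r s) := by
  ext
  simp [hSeq, kFac]

abbrev cokernelHSeqLeftHomologyData (X : ChainComplex A ℤ) (p q r s : ℤ) :
    (X.sc' q r s).LeftHomologyData where
  K := kernel (X.d r s)
  H := cokernel (hSeq X p q r s)
  i := kernel.ι _
  π := cokernel.π _
  wi := kernel.condition _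
  hi := kernelIsKernel _
  wπ := by
    change kFac X q r s ≫ _ = 0
    simp [← π_hSeq X p]
  hπ := isCokernelEpiComp (cokernelIsCokernel _) (cokernel.π (X.d p q)) (π_hSeq X p q r s).symm

abbrev kernelHSeqRightHomologyData (X : ChainComplex A ℤ) (q r s t : ℤ) :
    (X.sc' q r s).RightHomologyData where
  Q := cokernel (X.d q r)
  H := kernel (hSeq X q r s t)
  p := cokernel.π _
  ι := kernel.ι _
  wp := cokernel.condition _
  hp := cokernelIsCokernel _
  wι := by
    change _ ≫ cokernel.desc _ (X.d r s) _ = 0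
    simp [← hSeq_ι X q r s t]
  hι := isKernelCompMono (kernelIsKernel _) (kernel.ι (X.d s t)) (hSeq_ι X q r s t).symm

lemma iSeq_eq_leftRightHomologyComparison' (X : ChainComplex A ℤ) (p q r s t : ℤ) :
    iSeq X p q r s t = ShortComplex.leftRightHomologyComparison'
      (cokernelHSeqLeftHomologyData X p q r s) (kernelHSeqRightHomologyData X q r s t) := by
  rw [← cancel_epi (cokernel.π _), ← cancel_mono (kernel.ι _)]
  simp only [iSeq, Category.assoc, kernel.lift_ι, cokernel.π_desc]
  exact (ShortComplex.π_leftRightHomologyComparison'_ι (cokernelHSeqLeftHomologyData X p q r s)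
    (kernelHSeqRightHomologyData X q r s t)).symm

instance isIso_iSeq (X : ChainComplex A ℤ) (p q r s t : ℤ) : IsIso (iSeq X p q r s t) := by
  rw [iSeq_eq_leftRightHomologyComparison']
  infer_instance

lemma iSeq_comp_Kg {B C : ChainComplex A ℤ} (g : B ⟶ C) (p q r s t : ℤ) :
    iSeq B p q r s t ≫ Kg g q r s t =
      cokernel.map _ _ (cokMap g p q) (kerMap g r s) (hSeq_nat g p q r s) ≫ iSeq C p q r s t := by
  ext
  simp [iSeq, Kg, cokMap, kerMap]

end HomologyComparison

/-- **Statement 14** (The long exact sequence associated with any morphism of chain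
complexes in an abelian category):
`⋯ ⟶ H_{n+1}(B) ⟶ H_{n+1}(C) ⟶ Cok(h^P_{n+1}) ⟶ H_n(B) ⟶ H_n(C) ⟶ Cok(h^P_n) ⟶ ⋯`,
where homology is represented as `H_m(X) = Ker(h^{FX}_m)`, the map `H ⟶ H` is induced
by `g`, the map `H_n(C) ⟶ Cok(h^P_n)` is `δ n`, and the map
`Cok(h^P_n) ⟶ H_{n-1}(B)` is induced by the pullback projection followed by the
canonical identification `Cok(h^{FB}_n) ≅ Ker(h^{FB}_{n-1})`. -/
theorem long_exact_sequence_of_chain_map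
    (A : Type u) [Category.{v} A] [Abelian A]
    (B C : ChainComplex A ℤ) (g : B ⟶ C) :
    ∀ n : ℤ,
      (∃ w : Kg g (n+1) n (n-1) (n-2) ≫ delPb g n = 0, (ShortComplex.mk _ _ w).Exact) ∧
      (∃ w : delPb g n ≫ (CpiPb g n ≫ iSeq B (n+1) n (n-1) (n-2) (n-3)) = 0,
          (ShortComplex.mk _ _ w).Exact) ∧
      (∃ w : (CpiPb g n ≫ iSeq B (n+1) n (n-1) (n-2) (n-3)) ≫ Kg g n (n-1) (n-2) (n-3) = 0,
          (ShortComplex.mk _ _ w).Exact) := by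
  intro n
  have w := hSeq_nat g (n+1) n (n-1) (n-2)
  refine ⟨⟨_, Abelian.exact_kernel_map_squareδ w⟩, ?_, ?_⟩
  · exact (Abelian.exact_squareδ_squareCokernelFst w).exists_exact_mk_of_iso_of_mono (Iso.refl _)
      (iSeq B (n+1) n (n-1) (n-2) (n-3)) (Category.comp_id _) (Category.id_comp _)
  · exact (Abelian.exact_squareCokernelFst_cokernel_map w).exists_exact_mk_of_iso_of_mono
      (asIso (iSeq B (n+1) n (n-1) (n-2) (n-3))) (iSeq C (n+1) n (n-1) (n-2) (n-3)) rfl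
      (iSeq_comp_Kg g (n+1) n (n-1) (n-2) (n-3))
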